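/- arXiv:1204.1685 — 4 statements merged into one kernel-verified Lean document; each statement's English description precedes it below -/
import Mathlib

section
/- If two continuous bounded nonnegative functions p and p̂ on ℝ^d satisfy ‖p̂ - p‖_∞ ≤ ε, then the corresponding exponential density-sensitive metrics satisfy e^{-αε} D_p(x1,x2) ≤ D_{p̂}(x1,x2) ≤ e^{αε} D_p(x1,x2) for all x1, x2 ∈ ℝ^d. -/
open MeasureTheory Real Filter

/-- The exponential density-sensitive distance: infimum over continuous unit-speed
curves `γ : [0,L] → ℝ^d` from `x` to `y` of `∫_0^L exp(-α p(γ t)) dt`. Unit speed is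
expressed by `γ` being 1-Lipschitz with total variation on `[0,L]` equal to `L`. -/
noncomputable def expDist {d : ℕ} (p : EuclideanSpace ℝ (Fin d) → ℝ) (α : ℝ)
    (x y : EuclideanSpace ℝ (Fin d)) : ℝ :=
  sInf { I : ℝ | ∃ (L : ℝ) (γ : ℝ → EuclideanSpace ℝ (Fin d)),
    0 ≤ L ∧ LipschitzWith 1 γ ∧
    eVariationOn γ (Set.Icc 0 L) = ENNReal.ofReal L ∧
    γ 0 = x ∧ γ L = y ∧
    I = ∫ t in (0:ℝ)..L, Real.exp (-α * p (γ t)) }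

lemma expDist_bddBelow {d : ℕ} (p : EuclideanSpace ℝ (Fin d) → ℝ) (α : ℝ)
    (x y : EuclideanSpace ℝ (Fin d)) :
    ∀ I ∈ { I : ℝ | ∃ (L : ℝ) (γ : ℝ → EuclideanSpace ℝ (Fin d)),
      0 ≤ L ∧ LipschitzWith 1 γ ∧
      eVariationOn γ (Set.Icc 0 L) = ENNReal.ofReal L ∧
      γ 0 = x ∧ γ L = y ∧
      I = ∫ t in (0:ℝ)..L, Real.exp (-α * p (γ t)) }, 0 ≤ I := by
  rintro I ⟨L, γ, hL, -, -, -, -, rfl⟩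
  exact intervalIntegral.integral_nonneg hL (fun t _ => (Real.exp_pos _).le)

lemma expDist_le_exp_mul {d : ℕ} (p q : EuclideanSpace ℝ (Fin d) → ℝ)
    (α ε : ℝ) (hp : Continuous p) (hq : Continuous q)
    (hα : 0 ≤ α) (h : ∀ x, p x ≤ q x + ε)
    (x y : EuclideanSpace ℝ (Fin d)) :
    expDist q α x y ≤ Real.exp (α * ε) * expDist p α x y := by
  set Sp := { I : ℝ | ∃ (L : ℝ) (γ : ℝ → EuclideanSpace ℝ (Fin d)),
    0 ≤ L ∧ LipschitzWith 1 γ ∧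
    eVariationOn γ (Set.Icc 0 L) = ENNReal.ofReal L ∧
    γ 0 = x ∧ γ L = y ∧
    I = ∫ t in (0:ℝ)..L, Real.exp (-α * p (γ t)) } with hSp
  set Sq := { I : ℝ | ∃ (L : ℝ) (γ : ℝ → EuclideanSpace ℝ (Fin d)),
    0 ≤ L ∧ LipschitzWith 1 γ ∧
    eVariationOn γ (Set.Icc 0 L) = ENNReal.ofReal L ∧
    γ 0 = x ∧ γ L = y ∧
    I = ∫ t in (0:ℝ)..L, Real.exp (-α * q (γ t)) } with hSq
  have hepos : (0:ℝ) < Real.exp (α * ε) := Real.exp_pos _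
  by_cases hne : Sp.Nonempty
  · -- main case
    have key : ∀ I ∈ Sp, expDist q α x y ≤ Real.exp (α * ε) * I := by
      rintro I ⟨L, γ, hL, hlip, hvar, h0, hLy, rfl⟩
      have hγ : Continuous γ := hlip.continuous
      have memq : (∫ t in (0:ℝ)..L, Real.exp (-α * q (γ t))) ∈ Sq :=
        ⟨L, γ, hL, hlip, hvar, h0, hLy, rfl⟩
      have h1 : expDist q α x y ≤ ∫ t in (0:ℝ)..L, Real.exp (-α * q (γ t)) :=
        csInf_le ⟨0, fun I hI => expDist_bddBelow q α x y I hI⟩ memq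
      have h2 : (∫ t in (0:ℝ)..L, Real.exp (-α * q (γ t)))
          ≤ ∫ t in (0:ℝ)..L, Real.exp (α * ε) * Real.exp (-α * p (γ t)) := by
        apply intervalIntegral.integral_mono_on hL
        · exact ((Real.continuous_exp.comp ((continuous_const.mul (hq.comp hγ))
            )).intervalIntegrable _ _)
        · exact ((continuous_const.mul (Real.continuous_exp.comp
            (continuous_const.mul (hp.comp hγ)))).intervalIntegrable _ _)
        · intro t _
          rw [← Real.exp_add]
          apply Real.exp_le_exp.2
          have := h (γ t)
          nlinarith [mul_le_mul_of_nonneg_left this hα]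
      rw [intervalIntegral.integral_const_mul] at h2
      exact h1.trans h2
    have hlow : expDist q α x y / Real.exp (α * ε) ≤ expDist p α x y := by
      apply le_csInf hne
      intro I hI
      rw [div_le_iff₀ hepos, mul_comm]
      exact key I hI
    rw [div_le_iff₀ hepos, mul_comm] at hlow
    exact hlow
  · -- empty case: both sets empty
    have hqe : ¬ Sq.Nonempty := by
      rintro ⟨I, L, γ, hL, hlip, hvar, h0, hLy, rfl⟩
      exact hne ⟨_, L, γ, hL, hlip, hvar, h0, hLy, rfl⟩
    have h1 : expDist q α x y = 0 := by
      rw [expDist, ← hSq, Set.not_nonempty_iff_eq_empty.1 hqe, Real.sInf_empty]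
    have h2 : expDist p α x y = 0 := by
      rw [expDist, ← hSp, Set.not_nonempty_iff_eq_empty.1 hne, Real.sInf_empty]
    rw [h1, h2, mul_zero]

theorem expDist_sup_perturbation {d : ℕ} (p phat : EuclideanSpace ℝ (Fin d) → ℝ)
    (α ε : ℝ) (hp : Continuous p) (hphat : Continuous phat)
    (hbp : BddAbove (Set.range p)) (hbphat : BddAbove (Set.range phat))
    (hposp : ∀ x, 0 ≤ p x) (hposphat : ∀ x, 0 ≤ phat x)
    (hα : 0 ≤ α) (hε : 0 ≤ ε)
    (hclose : ∀ x, |phat x - p x| ≤ ε) :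
    ∀ x1 x2 : EuclideanSpace ℝ (Fin d),
      Real.exp (-α * ε) * expDist p α x1 x2 ≤ expDist phat α x1 x2 ∧
        expDist phat α x1 x2 ≤ Real.exp (α * ε) * expDist p α x1 x2 := by
  intro x1 x2
  have h1 : ∀ x, p x ≤ phat x + ε := by
    intro x; have := abs_le.1 (hclose x); linarith [this.2]
  have h2 : ∀ x, phat x ≤ p x + ε := by
    intro x; have := abs_le.1 (hclose x); linarith [this.1]
  constructor
  · have := expDist_le_exp_mul phat p α ε hphat hp hα h2 x1 x2
    have hmul := mul_le_mul_of_nonneg_left this (Real.exp_pos (-α * ε)).le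
    calc Real.exp (-α * ε) * expDist p α x1 x2
        ≤ Real.exp (-α * ε) * (Real.exp (α * ε) * expDist phat α x1 x2) := hmul
      _ = expDist phat α x1 x2 := by
          rw [← mul_assoc, ← Real.exp_add]; ring_nf; simp
  · exact expDist_le_exp_mul p phat α ε hp hphat hα h1 x1 x2
end

section
/- Covering bound for the ball-mass integral: for any probability measure P on a metric space with covering number N(δ/2) (minimal number of balls of radius δ/2 covering the support of P), one has ∫ dP(x)/P(B(x,δ)) ≤ N(δ/2), where B(x,δ) is the closed ball of radius δ around x. -/
open MeasureTheory

lemma setLIntegral_ball_le {X : Type*} [MeasurableSpace X]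
    [MetricSpace X] [OpensMeasurableSpace X]
    (P : Measure X) (δ : ℝ) (c : X) :
    ∫⁻ x in Metric.closedBall c (δ / 2), (P (Metric.closedBall x δ))⁻¹ ∂P ≤ 1 := by
  set A := Metric.closedBall c (δ / 2)
  have h : ∀ x ∈ A, (P (Metric.closedBall x δ))⁻¹ ≤ (P A)⁻¹ := by
    intro x hx
    apply ENNReal.inv_le_inv.mpr
    apply measure_mono
    intro y hy
    calc dist y x ≤ dist y c + dist c x := dist_triangle y c x
    _ ≤ δ / 2 + δ / 2 := add_le_add hy (by rw [dist_comm]; exact hx)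
    _ = δ := by ring
  calc ∫⁻ x in A, (P (Metric.closedBall x δ))⁻¹ ∂P
      ≤ ∫⁻ _ in A, (P A)⁻¹ ∂P := setLIntegral_mono' Metric.isClosed_closedBall.measurableSet h
    _ = (P A)⁻¹ * P A := by rw [setLIntegral_const]
    _ ≤ 1 := ENNReal.inv_mul_le_one _

/-- Covering bound for the ball-mass integral: if the support of a probability
measure `P` is covered (up to `P`-null sets) by the closed balls of radius `δ/2`
centered at the finitely many points of `S`, then `∫ dP(x)/P(B(x,δ)) ≤ #S`. -/
theorem ball_mass_integral_le_covering {X : Type*} [MeasurableSpace X]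
    [MetricSpace X] [OpensMeasurableSpace X]
    (P : Measure X) [IsProbabilityMeasure P] (δ : ℝ) (hδ : 0 < δ)
    (S : Finset X)
    (hcover : P (⋃ c ∈ S, Metric.closedBall c (δ / 2)) = 1) :
    ∫⁻ x, (P (Metric.closedBall x δ))⁻¹ ∂P ≤ (S.card : ENNReal) := by
  set f : X → ENNReal := fun x => (P (Metric.closedBall x δ))⁻¹ with hf
  set U := ⋃ c ∈ S, Metric.closedBall c (δ / 2) with hU
  have hUm : MeasurableSet U := by
    apply MeasurableSet.biUnion S.countable_toSet
    intro c _
    exact Metric.isClosed_closedBall.measurableSet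
  have hcompl : P Uᶜ = 0 := by
    rw [measure_compl hUm (measure_ne_top P U), hcover, measure_univ, tsub_self]
  have h1 : ∫⁻ x, f x ∂P = ∫⁻ x in U, f x ∂P := by
    rw [← lintegral_add_compl f hUm, setLIntegral_measure_zero _ _ hcompl, add_zero]
  rw [h1]
  have key : ∀ T : Finset X, ∫⁻ x in ⋃ c ∈ T, Metric.closedBall c (δ / 2), f x ∂P
      ≤ (T.card : ENNReal) := by
    intro T
    classical
    induction T using Finset.induction_on with
    | empty => simp
    | @insert a T' ha ih =>
      rw [Finset.set_biUnion_insert]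
      calc ∫⁻ x in Metric.closedBall a (δ / 2) ∪ ⋃ c ∈ T', Metric.closedBall c (δ / 2), f x ∂P
          ≤ ∫⁻ x in Metric.closedBall a (δ / 2), f x ∂P
            + ∫⁻ x in ⋃ c ∈ T', Metric.closedBall c (δ / 2), f x ∂P :=
            lintegral_union_le _ _ _
        _ ≤ 1 + (T'.card : ENNReal) := add_le_add (setLIntegral_ball_le P δ a) ih
        _ = ((insert a T').card : ENNReal) := by
            rw [Finset.card_insert_of_notMem ha]; push_cast; ring
  exact key S
end

section
/- Variance bound for cross-validation residuals: if Y = f*(X) + ε with ε ~ N(0, σ²) independent of X, and |f(x)| ≤ M, |f*(x)| ≤ M for all x, then for U = -(Y - f(X))² + (Y - f*(X))², one has Var(U) ≤ E[U²] ≤ 4(M² + σ²)·E[(f(X) - f*(X))²]. -/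
/-!
With `g = f(X) - f*(X)` one has `U = 2εg - g²`, so `U² = 4ε²g² - 4εg³ + g⁴`. Independence of `ε`
and `X` together with `E ε = 0` kill the cross term and give `E[ε²g²] = σ² E[g²]`, while
`|g| ≤ 2M` gives `E[g⁴] ≤ 4M² E[g²]`.
-/

open MeasureTheory ProbabilityTheory

section

variable {Ω : Type*} [MeasurableSpace Ω] {μ : Measure Ω}

lemma integrable_pow_of_abs_le [IsFiniteMeasure μ] {g : Ω → ℝ} {K : ℝ}
    (hg : AEStronglyMeasurable g μ) (hgK : ∀ᵐ ω ∂μ, |g ω| ≤ K) (k : ℕ) :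
    Integrable (fun ω ↦ g ω ^ k) μ :=
  .of_bound (hg.pow k) (K ^ k) <| hgK.mono fun ω hω ↦ by
    rw [Real.norm_eq_abs, abs_pow]
    exact pow_le_pow_left₀ (abs_nonneg _) hω k

lemma integral_pow_four_le_of_abs_le [IsFiniteMeasure μ] {g : Ω → ℝ} {K : ℝ}
    (hg : AEStronglyMeasurable g μ) (hgK : ∀ᵐ ω ∂μ, |g ω| ≤ K) :
    ∫ ω, g ω ^ 4 ∂μ ≤ K ^ 2 * ∫ ω, g ω ^ 2 ∂μ := by
  rw [← integral_const_mul]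
  refine integral_mono_ae (integrable_pow_of_abs_le hg hgK 4)
    ((integrable_pow_of_abs_le hg hgK 2).const_mul _) (hgK.mono fun ω hω ↦ ?_)
  have hsq : g ω ^ 2 ≤ K ^ 2 := sq_le_sq' (neg_le_of_abs_le hω) (le_of_abs_le hω)
  calc g ω ^ 4 = g ω ^ 2 * g ω ^ 2 := by ring
    _ ≤ K ^ 2 * g ω ^ 2 := mul_le_mul_of_nonneg_right hsq (sq_nonneg _)

lemma integral_sq_two_mul_mul_sub_sq_eq [IsProbabilityMeasure μ] {e g : Ω → ℝ} {K : ℝ}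
    (he : MemLp e 2 μ) (he_mean : μ[e] = 0) (hg : AEStronglyMeasurable g μ)
    (hgK : ∀ᵐ ω ∂μ, |g ω| ≤ K) (hindep : IndepFun e g μ) :
    ∫ ω, (2 * e ω * g ω - g ω ^ 2) ^ 2 ∂μ
      = 4 * Var[e; μ] * ∫ ω, g ω ^ 2 ∂μ + ∫ ω, g ω ^ 4 ∂μ := by
  have hg_pow := integrable_pow_of_abs_le hg hgK
  have hindep₂₂ : IndepFun (fun ω ↦ e ω ^ 2) (fun ω ↦ g ω ^ 2) μ :=
    hindep.comp (measurable_id.pow_const 2) (measurable_id.pow_const 2)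
  have hindep₁₃ : IndepFun e (fun ω ↦ g ω ^ 3) μ :=
    hindep.comp measurable_id (measurable_id.pow_const 3)
  have hint₂₂ : Integrable (fun ω ↦ e ω ^ 2 * g ω ^ 2) μ :=
    hindep₂₂.integrable_mul he.integrable_sq (hg_pow 2)
  have hint₁₃ : Integrable (fun ω ↦ e ω * g ω ^ 3) μ :=
    hindep₁₃.integrable_mul (he.integrable one_le_two) (hg_pow 3)
  have hfactor₂₂ : ∫ ω, e ω ^ 2 * g ω ^ 2 ∂μ = Var[e; μ] * ∫ ω, g ω ^ 2 ∂μ := by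
    rw [variance_of_integral_eq_zero he.aemeasurable he_mean]
    exact hindep₂₂.integral_mul_eq_mul_integral he.integrable_sq.1 (hg_pow 2).1
  have hcross : ∫ ω, e ω * g ω ^ 3 ∂μ = 0 := by
    rw [← zero_mul (∫ ω, g ω ^ 3 ∂μ), ← he_mean]
    exact hindep₁₃.integral_mul_eq_mul_integral he.1 (hg_pow 3).1
  calc ∫ ω, (2 * e ω * g ω - g ω ^ 2) ^ 2 ∂μ
      = ∫ ω, 4 * (e ω ^ 2 * g ω ^ 2) - 4 * (e ω * g ω ^ 3) + g ω ^ 4 ∂μ :=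
        integral_congr_ae (.of_forall fun ω ↦ by ring)
    _ = 4 * ∫ ω, e ω ^ 2 * g ω ^ 2 ∂μ - 4 * ∫ ω, e ω * g ω ^ 3 ∂μ + ∫ ω, g ω ^ 4 ∂μ := by
        rw [integral_add (f := fun ω ↦ 4 * (e ω ^ 2 * g ω ^ 2) - 4 * (e ω * g ω ^ 3))
          ((hint₂₂.const_mul 4).sub (hint₁₃.const_mul 4)) (hg_pow 4),
          integral_sub (hint₂₂.const_mul 4) (hint₁₃.const_mul 4),
          integral_const_mul, integral_const_mul]
    _ = 4 * Var[e; μ] * ∫ ω, g ω ^ 2 ∂μ + ∫ ω, g ω ^ 4 ∂μ := by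
        rw [hfactor₂₂, hcross]; ring

lemma integral_sq_two_mul_mul_sub_sq_le [IsProbabilityMeasure μ] {e g : Ω → ℝ} {K : ℝ}
    (he : MemLp e 2 μ) (he_mean : μ[e] = 0) (hg : AEStronglyMeasurable g μ)
    (hgK : ∀ᵐ ω ∂μ, |g ω| ≤ K) (hindep : IndepFun e g μ) :
    ∫ ω, (2 * e ω * g ω - g ω ^ 2) ^ 2 ∂μ ≤ (4 * Var[e; μ] + K ^ 2) * ∫ ω, g ω ^ 2 ∂μ := by
  rw [integral_sq_two_mul_mul_sub_sq_eq he he_mean hg hgK hindep, add_mul]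
  gcongr
  exact integral_pow_four_le_of_abs_le hg hgK

end

/-- Variance bound for cross-validation residuals: if `Y = f*(X) + ε` with
`ε ~ N(0,σ²)` independent of `X`, and `|f| ≤ M`, `|f*| ≤ M`, then for
`U = -(Y-f(X))² + (Y-f*(X))²` we have `Var(U) ≤ E[U²] ≤ 4(M²+σ²)·E[(f(X)-f*(X))²]`. -/
theorem variance_bound_cv {Ω : Type*} [MeasurableSpace Ω]
    (μ : Measure Ω) [IsProbabilityMeasure μ] {d : ℕ}
    (X : Ω → EuclideanSpace ℝ (Fin d)) (e : Ω → ℝ)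
    (f fstar : EuclideanSpace ℝ (Fin d) → ℝ) (M : ℝ) (σ2 : NNReal)
    (hX : Measurable X) (he : Measurable e)
    (hf : Measurable f) (hfstar : Measurable fstar)
    (hgauss : Measure.map e μ = gaussianReal 0 σ2)
    (hindep : IndepFun e X μ)
    (hfM : ∀ x, |f x| ≤ M) (hfstarM : ∀ x, |fstar x| ≤ M) :
    ∀ Y U : Ω → ℝ, (∀ ω, Y ω = fstar (X ω) + e ω) →
      (∀ ω, U ω = -(Y ω - f (X ω))^2 + (Y ω - fstar (X ω))^2) →
      variance U μ ≤ ∫ ω, (U ω)^2 ∂μ ∧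
        ∫ ω, (U ω)^2 ∂μ ≤
          4 * (M^2 + (σ2 : ℝ)) * ∫ ω, (f (X ω) - fstar (X ω))^2 ∂μ := by
  intro Y U hY hU
  set g : Ω → ℝ := fun ω ↦ f (X ω) - fstar (X ω)
  have hU_eq : U = fun ω ↦ 2 * e ω * g ω - g ω ^ 2 := by
    ext ω
    rw [hU, hY]
    ring
  have he_law : HasLaw e (gaussianReal 0 σ2) μ := ⟨he.aemeasurable, hgauss⟩
  have hg_bound : ∀ᵐ ω ∂μ, |g ω| ≤ 2 * M := .of_forall fun ω ↦
    (abs_sub _ _).trans (by linarith [hfM (X ω), hfstarM (X ω)])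
  have hU_meas : AEStronglyMeasurable U μ := by
    rw [hU_eq]
    fun_prop
  refine ⟨by simpa using variance_le_expectation_sq hU_meas, ?_⟩
  calc ∫ ω, U ω ^ 2 ∂μ ≤ (4 * Var[e; μ] + (2 * M) ^ 2) * ∫ ω, g ω ^ 2 ∂μ := by
        rw [hU_eq]
        exact integral_sq_two_mul_mul_sub_sq_le he_law.hasGaussianLaw.memLp_two
          (he_law.integral_eq.trans integral_id_gaussianReal) (by fun_prop) hg_bound
          (hindep.comp measurable_id (hf.sub hfstar))
    _ = 4 * (M ^ 2 + σ2) * ∫ ω, g ω ^ 2 ∂μ := by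
        rw [he_law.variance_eq, variance_id_gaussianReal]
        ring
end

section
/- Affinity lower bound for product measures: for probability measures P and Q on the same space and n ≥ 1, the testing affinity of the n-fold products satisfies ‖Pⁿ ∧ Qⁿ‖ ≥ (1/8)(1 - TV(P,Q))^{2n}, where ‖μ ∧ ν‖ = ∫ min(dμ, dν). -/
open MeasureTheory

/-- Total variation distance between two finite measures. -/
noncomputable def tvDist {Ω : Type*} [MeasurableSpace Ω]
    (P Q : Measure Ω) [IsFiniteMeasure P] [IsFiniteMeasure Q] : ℝ :=
  ((P.toSignedMeasure - Q.toSignedMeasure).totalVariation Set.univ).toReal / 2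

/-!
For a Hahn set `s` of `(P, Q)` the overlap measure `P|_s + Q|_sᶜ` lies below `P ⊓ Q`, and since
the Jordan decomposition of `P - Q` is `(P - Q, Q - P)` its mass is `1 - TV(P, Q)`. Its `n`-fold
product lies below both `Pⁿ` and `Qⁿ`, so `‖Pⁿ ∧ Qⁿ‖ ≥ (1 - TV(P, Q))ⁿ`, which dominates
`(1/8)(1 - TV(P, Q))^{2n}` because `0 ≤ 1 - TV(P, Q) ≤ 1`.
-/

theorem MeasureTheory.Measure.pi_mono {ι : Type*} [Fintype ι] {α : ι → Type*}
    [∀ i, MeasurableSpace (α i)] {μ ν : ∀ i, Measure (α i)} (h : ∀ i, μ i ≤ ν i) :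
    Measure.pi μ ≤ Measure.pi ν := by
  refine Measure.le_iff.2 fun t ht => ?_
  rw [Measure.pi_def, Measure.pi_def, toMeasure_apply _ _ ht, toMeasure_apply _ _ ht]
  refine OuterMeasure.le_boundedBy.2 (fun u => ?_) t
  exact (OuterMeasure.boundedBy_le u).trans
    (Finset.prod_le_prod' fun i _ => Measure.le_iff'.1 (h i) _)

theorem tvDist_eq_sub_add_sub {Ω : Type*} [MeasurableSpace Ω] (P Q : Measure Ω)
    [IsFiniteMeasure P] [IsFiniteMeasure Q] :
    tvDist P Q = ((P - Q) Set.univ + (Q - P) Set.univ).toReal / 2 := by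
  simp [tvDist, SignedMeasure.totalVariation, Measure.jordanDecompositionOfToSignedMeasureSub]

theorem tvDist_nonneg {Ω : Type*} [MeasurableSpace Ω] (P Q : Measure Ω) [IsFiniteMeasure P]
    [IsFiniteMeasure Q] : 0 ≤ tvDist P Q := by
  unfold tvDist
  positivity

namespace MeasureTheory.IsHahnDecomposition

variable {α : Type*} [MeasurableSpace α] {μ ν : Measure α} {s : Set α}

theorem restrict_add_restrict_compl_le_inf (h : IsHahnDecomposition μ ν s) :
    μ.restrict s + ν.restrict sᶜ ≤ μ ⊓ ν := by
  refine le_inf ?_ ?_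
  · calc μ.restrict s + ν.restrict sᶜ ≤ μ.restrict s + μ.restrict sᶜ :=
          add_le_add le_rfl h.ge_on_compl
      _ = μ := Measure.restrict_add_restrict_compl h.measurableSet
  · calc μ.restrict s + ν.restrict sᶜ ≤ ν.restrict s + ν.restrict sᶜ :=
          add_le_add h.le_on le_rfl
      _ = ν := Measure.restrict_add_restrict_compl h.measurableSet

theorem sub_add_restrict_add_restrict_compl_eq_right [IsFiniteMeasure μ]
    (h : IsHahnDecomposition μ ν s) : ν - μ + (μ.restrict s + ν.restrict sᶜ) = ν := by
  have hs := h.measurableSet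
  have hsc : (ν - μ).restrict sᶜ = 0 :=
    Measure.restrict_eq_zero.2 (Measure.sub_apply_eq_zero_of_isHahnDecomposition h.compl)
  rw [← Measure.restrict_add_restrict_compl (μ := ν - μ) hs, hsc, add_zero,
    Measure.restrict_sub_eq_restrict_sub_restrict hs, ← add_assoc,
    Measure.sub_add_cancel_of_le h.le_on, Measure.restrict_add_restrict_compl hs]

theorem sub_add_restrict_add_restrict_compl_eq_left [IsFiniteMeasure ν]
    (h : IsHahnDecomposition μ ν s) : μ - ν + (μ.restrict s + ν.restrict sᶜ) = μ := by
  simpa [add_comm (ν.restrict sᶜ)] using h.compl.sub_add_restrict_add_restrict_compl_eq_right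

theorem one_sub_tvDist_eq [IsProbabilityMeasure μ] [IsProbabilityMeasure ν]
    (h : IsHahnDecomposition μ ν s) :
    1 - tvDist μ ν = ((μ.restrict s + ν.restrict sᶜ) Set.univ).toReal := by
  set m := μ.restrict s + ν.restrict sᶜ
  have hμ : (μ - ν) Set.univ + m Set.univ = 1 := by
    rw [← Measure.add_apply, h.sub_add_restrict_add_restrict_compl_eq_left, measure_univ]
  have hν : (ν - μ) Set.univ + m Set.univ = 1 := by
    rw [← Measure.add_apply, h.sub_add_restrict_add_restrict_compl_eq_right, measure_univ]
  replace hμ := congrArg ENNReal.toReal hμ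
  replace hν := congrArg ENNReal.toReal hν
  rw [ENNReal.toReal_add (by finiteness) (by finiteness), ENNReal.toReal_one] at hμ hν
  rw [tvDist_eq_sub_add_sub, ENNReal.toReal_add (by finiteness) (by finiteness)]
  linarith

end MeasureTheory.IsHahnDecomposition

theorem tvDist_le_one {Ω : Type*} [MeasurableSpace Ω] (P Q : Measure Ω)
    [IsProbabilityMeasure P] [IsProbabilityMeasure Q] : tvDist P Q ≤ 1 := by
  obtain ⟨s, hs⟩ := exists_isHahnDecomposition P Q
  have := hs.one_sub_tvDist_eq
  linarith [ENNReal.toReal_nonneg (a := (P.restrict s + Q.restrict sᶜ) Set.univ)]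

theorem ofReal_one_sub_tvDist_pow_le_inf_pi {Ω ι : Type*} [MeasurableSpace Ω] [Fintype ι]
    (P Q : Measure Ω) [IsProbabilityMeasure P] [IsProbabilityMeasure Q] :
    ENNReal.ofReal ((1 - tvDist P Q) ^ Fintype.card ι) ≤
      (Measure.pi (fun _ : ι => P) ⊓ Measure.pi (fun _ : ι => Q)) Set.univ := by
  obtain ⟨s, hs⟩ := exists_isHahnDecomposition P Q
  have hle := hs.restrict_add_restrict_compl_le_inf
  have hpi : Measure.pi (fun _ : ι => P.restrict s + Q.restrict sᶜ) ≤
      Measure.pi (fun _ : ι => P) ⊓ Measure.pi (fun _ : ι => Q) :=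
    le_inf (Measure.pi_mono fun _ => hle.trans inf_le_left)
      (Measure.pi_mono fun _ => hle.trans inf_le_right)
  calc ENNReal.ofReal ((1 - tvDist P Q) ^ Fintype.card ι)
      = Measure.pi (fun _ : ι => P.restrict s + Q.restrict sᶜ) Set.univ := by
        rw [hs.one_sub_tvDist_eq, ENNReal.ofReal_pow ENNReal.toReal_nonneg,
          ENNReal.ofReal_toReal (by finiteness), Measure.pi_univ, Finset.prod_const,
          Finset.card_univ]
    _ ≤ _ := Measure.le_iff'.1 hpi _

theorem affinity_product_lower_bound_general {Ω : Type*} [MeasurableSpace Ω]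
    (P Q : Measure Ω) [IsProbabilityMeasure P] [IsProbabilityMeasure Q]
    (n : ℕ) :
    ENNReal.ofReal ((1 / 8) * (1 - tvDist P Q) ^ (2 * n)) ≤
      (Measure.pi (fun _ : Fin n => P) ⊓ Measure.pi (fun _ : Fin n => Q))
        Set.univ := by
  have ha0 : 0 ≤ 1 - tvDist P Q := sub_nonneg.2 (tvDist_le_one P Q)
  have ha1 : 1 - tvDist P Q ≤ 1 := sub_le_self _ (tvDist_nonneg P Q)
  have hpow : (1 / 8) * (1 - tvDist P Q) ^ (2 * n) ≤ (1 - tvDist P Q) ^ n := by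
    rw [pow_mul']
    nlinarith [pow_nonneg ha0 n, pow_le_one₀ ha0 ha1 (n := n)]
  calc ENNReal.ofReal ((1 / 8) * (1 - tvDist P Q) ^ (2 * n))
      ≤ ENNReal.ofReal ((1 - tvDist P Q) ^ Fintype.card (Fin n)) := by
        rw [Fintype.card_fin]
        exact ENNReal.ofReal_le_ofReal hpow
    _ ≤ _ := ofReal_one_sub_tvDist_pow_le_inf_pi P Q

/-- Affinity lower bound for product measures: the testing affinity
`‖Pⁿ ∧ Qⁿ‖ = (Pⁿ ⊓ Qⁿ)(univ)` satisfies `‖Pⁿ ∧ Qⁿ‖ ≥ (1/8)(1 - TV(P,Q))^{2n}`. -/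
theorem affinity_product_lower_bound {Ω : Type*} [MeasurableSpace Ω]
    (P Q : Measure Ω) [IsProbabilityMeasure P] [IsProbabilityMeasure Q]
    (n : ℕ) (hn : 1 ≤ n) :
    ENNReal.ofReal ((1 / 8) * (1 - tvDist P Q) ^ (2 * n)) ≤
      (Measure.pi (fun _ : Fin n => P) ⊓ Measure.pi (fun _ : Fin n => Q))
        Set.univ :=
  affinity_product_lower_bound_general P Q n
end
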